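/- The LSimRank sequence has geometrically decreasing increments: for every c ≥ 0 and every M ≥ 0 such that |(S_1)_{ij} − (S_0)_{ij}| ≤ M for all i,j, one has |(S_{n+1})_{ij} − (S_n)_{ij}| ≤ cⁿ·M for all n ∈ ℕ and all i,j. -/

import Mathlib

/-! For a nonnegative `A`, the entry `(Aᵀ D A) i j` is bounded by `indeg i · indeg j · sup |D|`,
while `N i j · indeg i · indeg j ≤ 1`. Hence, as `|L i j| ≤ 1`, the map `F` is
`|c|`-Lipschitz for the entrywise sup distance, and the increments `S (m+1) - S m` shrink by a
factor `c` at each step. -/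

open Matrix

variable {n : ℕ}

/-- The in-degree of vertex `j` in the graph with adjacency matrix `A`. -/
noncomputable def indeg (A : Matrix (Fin n) (Fin n) ℝ) (j : Fin n) : ℝ :=
  ∑ u, A u j

/-- The normalization matrix: `N i j = 1/(indeg i · indeg j)` for `i ≠ j` (with the
convention that this is `0` when the product of in-degrees is `0`, since in `ℝ` we
have `0⁻¹ = 0`), and `N i i = 0`. -/
noncomputable def normMat (A : Matrix (Fin n) (Fin n) ℝ) : Matrix (Fin n) (Fin n) ℝ :=
  Matrix.of fun i j => if i = j then 0 else (indeg A i * indeg A j)⁻¹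

/-- The LSimRank iteration map `F(S) = I + c · (L ∘ N ∘ (Aᵀ S A))`,
where `∘` is the entrywise (Hadamard) product. -/
noncomputable def lsimStep (A L : Matrix (Fin n) (Fin n) ℝ) (c : ℝ)
    (S : Matrix (Fin n) (Fin n) ℝ) : Matrix (Fin n) (Fin n) ℝ :=
  1 + c • (Matrix.hadamard L (Matrix.hadamard (normMat A) (Aᵀ * S * A)))

/-- The LSimRank sequence: `S 0 = I`, `S (m+1) = F (S m)`. -/
noncomputable def lsimSeq (A L : Matrix (Fin n) (Fin n) ℝ) (c : ℝ) :
    ℕ → Matrix (Fin n) (Fin n) ℝ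
  | 0 => 1
  | m + 1 => lsimStep A L c (lsimSeq A L c m)

lemma indeg_nonneg {A : Matrix (Fin n) (Fin n) ℝ} (hA : ∀ i j, 0 ≤ A i j) (j : Fin n) :
    0 ≤ indeg A j :=
  Finset.sum_nonneg fun u _ => hA u j

lemma normMat_nonneg {A : Matrix (Fin n) (Fin n) ℝ} (hA : ∀ i j, 0 ≤ A i j) (i j : Fin n) :
    0 ≤ normMat A i j := by
  simp only [normMat, Matrix.of_apply]
  split_ifs
  · exact le_rfl
  · exact inv_nonneg.2 (mul_nonneg (indeg_nonneg hA i) (indeg_nonneg hA j))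

lemma normMat_mul_indeg_le_one (A : Matrix (Fin n) (Fin n) ℝ) (i j : Fin n) :
    normMat A i j * (indeg A i * indeg A j) ≤ 1 := by
  simp only [normMat, Matrix.of_apply]
  split_ifs
  · simp
  · rcases eq_or_ne (indeg A i * indeg A j) 0 with h0 | h0
    · simp [h0]
    · rw [inv_mul_cancel₀ h0]

lemma abs_transpose_mul_mul_apply_le {A D : Matrix (Fin n) (Fin n) ℝ} (hA : ∀ i j, 0 ≤ A i j)
    {K : ℝ} (hD : ∀ u v, |D u v| ≤ K) (i j : Fin n) :
    |(Aᵀ * D * A) i j| ≤ indeg A i * indeg A j * K := by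
  have hexpand : (Aᵀ * D * A) i j = ∑ u, ∑ v, A u i * D u v * A v j := by
    simp only [Matrix.mul_apply, Matrix.transpose_apply, Finset.sum_mul]
    exact Finset.sum_comm
  calc |(Aᵀ * D * A) i j|
      ≤ ∑ u, ∑ v, |A u i * D u v * A v j| := by
        rw [hexpand]
        exact (Finset.abs_sum_le_sum_abs _ _).trans
          (Finset.sum_le_sum fun u _ => Finset.abs_sum_le_sum_abs _ _)
    _ ≤ ∑ u, ∑ v, A u i * K * A v j := by
        gcongr with u _ v _
        rw [abs_mul, abs_mul, abs_of_nonneg (hA u i), abs_of_nonneg (hA v j)]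
        exact mul_le_mul_of_nonneg_right (mul_le_mul_of_nonneg_left (hD u v) (hA u i)) (hA v j)
    _ = indeg A i * indeg A j * K := by
        rw [indeg, indeg, Finset.sum_mul_sum, Finset.sum_mul]
        simp only [Finset.sum_mul]
        exact Finset.sum_congr rfl fun u _ => Finset.sum_congr rfl fun v _ => by ring

lemma lsimStep_sub_lsimStep_apply (A L : Matrix (Fin n) (Fin n) ℝ) (c : ℝ)
    (S T : Matrix (Fin n) (Fin n) ℝ) (i j : Fin n) :
    lsimStep A L c S i j - lsimStep A L c T i j
      = c * L i j * (normMat A i j * (Aᵀ * (S - T) * A) i j) := by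
  simp only [lsimStep, Matrix.add_apply, Matrix.smul_apply, Matrix.hadamard_apply,
    smul_eq_mul, Matrix.sub_mul, Matrix.mul_sub, Matrix.sub_apply]
  ring

lemma abs_lsimStep_sub_lsimStep_le {A L : Matrix (Fin n) (Fin n) ℝ} (hA : ∀ i j, 0 ≤ A i j)
    (hL : ∀ i j, |L i j| ≤ 1) (c : ℝ) {S T : Matrix (Fin n) (Fin n) ℝ} {K : ℝ}
    (hST : ∀ u v, |S u v - T u v| ≤ K) (i j : Fin n) :
    |lsimStep A L c S i j - lsimStep A L c T i j| ≤ |c| * K := by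
  have hK : 0 ≤ K := (abs_nonneg _).trans (hST i j)
  have hN := normMat_nonneg hA i j
  calc |lsimStep A L c S i j - lsimStep A L c T i j|
      = |c| * |L i j| * (normMat A i j * |(Aᵀ * (S - T) * A) i j|) := by
        rw [lsimStep_sub_lsimStep_apply, abs_mul, abs_mul, abs_mul, abs_of_nonneg hN]
    _ ≤ |c| * 1 * (normMat A i j * (indeg A i * indeg A j * K)) := by
        gcongr
        · exact hL i j
        · exact abs_transpose_mul_mul_apply_le hA (fun u v => by simpa using hST u v) i j
    _ = |c| * (normMat A i j * (indeg A i * indeg A j) * K) := by ring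
    _ ≤ |c| * (1 * K) := by gcongr; exact normMat_mul_indeg_le_one A i j
    _ = |c| * K := by ring

theorem lsimSeq_geometric_increments_general (A L : Matrix (Fin n) (Fin n) ℝ)
    (hA : ∀ i j, A i j = 0 ∨ A i j = 1)
    (hL0 : ∀ i j, 0 ≤ L i j) (hL1 : ∀ i j, L i j ≤ 1)
    (c : ℝ) (hc : 0 ≤ c) (M : ℝ)
    (h : ∀ i j, |lsimSeq A L c 1 i j - lsimSeq A L c 0 i j| ≤ M) :
    ∀ (m : ℕ) (i j : Fin n),
      |lsimSeq A L c (m + 1) i j - lsimSeq A L c m i j| ≤ c ^ m * M := by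
  have hA_nonneg : ∀ i j, 0 ≤ A i j := fun i j => by rcases hA i j with h0 | h1 <;> simp [*]
  have hL : ∀ i j, |L i j| ≤ 1 := fun i j => abs_le.2 ⟨by linarith [hL0 i j], hL1 i j⟩
  intro m
  induction m with
  | zero => simpa using h
  | succ k ih =>
    intro i j
    calc |lsimSeq A L c (k + 1 + 1) i j - lsimSeq A L c (k + 1) i j|
        ≤ |c| * (c ^ k * M) := abs_lsimStep_sub_lsimStep_le hA_nonneg hL c ih i j
      _ = c ^ (k + 1) * M := by rw [abs_of_nonneg hc, pow_succ]; ring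

/-- the LSimRank sequence has geometrically decreasing increments. -/
theorem lsimSeq_geometric_increments (A L : Matrix (Fin n) (Fin n) ℝ)
    (hA : ∀ i j, A i j = 0 ∨ A i j = 1)
    (hL0 : ∀ i j, 0 ≤ L i j) (hL1 : ∀ i j, L i j ≤ 1)
    (c : ℝ) (hc : 0 ≤ c) (M : ℝ) (hM : 0 ≤ M)
    (h : ∀ i j, |lsimSeq A L c 1 i j - lsimSeq A L c 0 i j| ≤ M) :
    ∀ (m : ℕ) (i j : Fin n),
      |lsimSeq A L c (m + 1) i j - lsimSeq A L c m i j| ≤ c ^ m * M :=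
  lsimSeq_geometric_increments_general A L hA hL0 hL1 c hc M h
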